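/- arXiv:1902.01063 — 3 statements merged into one kernel-verified Lean document; each statement's English description precedes it below -/
import Mathlib

section
/- Let 1 < p < q. For λ > 0 define μ(λ) := inf{(‖u'‖_p² + λ‖u‖_p²)/‖u‖_q² : u 2π-periodic, C¹, not identically zero}. Then the function λ ↦ μ(λ) is concave on (0,∞), satisfies μ(λ) ≤ λ for every λ > 0, and μ(λ) < λ whenever λ > λ₁*/(q − p). -/
/-!
Concavity and `μ(λ) ≤ λ` hold because `μ` is an infimum of functions affine in `λ`, and the
constant function `1` has quotient exactly `λ`.

For the strict inequality pick `v` of mean zero with `‖v'‖_p² < λ (q - p) ‖v‖_2²` and test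
`u = 1 + ε v`. Since `∫ v = 0`, `‖1 + ε v‖_r² = 1 + (r - 1) ε² ‖v‖_2² + o(ε²)`, so
`‖u'‖_p² + λ ‖u‖_p² - λ ‖u‖_q²` vanishes together with its first derivative at `ε = 0` and has
second derivative `2 (‖v'‖_p² - λ (q - p) ‖v‖_2²) < 0` there; hence it is negative for some
small `ε > 0`, which means the quotient of `u` is below `λ`.
-/

open MeasureTheory Real

/-- The L^r norm on the circle with the uniform probability measure dσ = dx/(2π),
for a 2π-periodic function `u : ℝ → ℝ`. -/
noncomputable def perNorm (r : ℝ) (u : ℝ → ℝ) : ℝ :=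
  ((1 / (2 * π)) * ∫ x in (0:ℝ)..(2 * π), |u x| ^ r) ^ (1 / r)

/-- `u` is 2π-periodic and C¹. -/
def PeriodicC1 (u : ℝ → ℝ) : Prop :=
  Function.Periodic u (2 * π) ∧ ContDiff ℝ 1 u

/-- λ₁ = inf ‖v'‖_p²/‖v‖_p² over 2π-periodic C¹ functions v ≢ 0 with ∫₀^{2π} v dx = 0. -/
noncomputable def lambdaOne (p : ℝ) : ℝ :=
  sInf { l : ℝ | ∃ v : ℝ → ℝ, PeriodicC1 v ∧ v ≠ 0 ∧
    (∫ x in (0:ℝ)..(2 * π), v x) = 0 ∧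
    l = (perNorm p (deriv v)) ^ 2 / (perNorm p v) ^ 2 }

/-- λ₁* = inf ‖v'‖_p²/‖v‖_2² over 2π-periodic C¹ functions v ≢ 0 with ∫₀^{2π} v dx = 0. -/
noncomputable def lambdaOneStar (p : ℝ) : ℝ :=
  sInf { l : ℝ | ∃ v : ℝ → ℝ, PeriodicC1 v ∧ v ≠ 0 ∧
    (∫ x in (0:ℝ)..(2 * π), v x) = 0 ∧
    l = (perNorm p (deriv v)) ^ 2 / (perNorm 2 v) ^ 2 }

/-- The p-Laplacian L_p u = (|u'|^{p-2} u')'. -/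
noncomputable def pLap (p : ℝ) (u : ℝ → ℝ) : ℝ → ℝ :=
  deriv (fun x => |deriv u x| ^ (p - 2) * deriv u x)

open Set Filter Topology

def rayleighQuotients (p q l : ℝ) : Set ℝ :=
  { m : ℝ | ∃ u : ℝ → ℝ, PeriodicC1 u ∧ u ≠ 0 ∧
      m = ((perNorm p (deriv u)) ^ 2 + l * (perNorm p u) ^ 2) / (perNorm q u) ^ 2 }

lemma perNorm_sq (r : ℝ) (u : ℝ → ℝ) :
    perNorm r u ^ 2 = ((1 / (2 * π)) * ∫ x in (0:ℝ)..(2 * π), |u x| ^ r) ^ (2 / r) := by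
  have hX : 0 ≤ (1 / (2 * π)) * ∫ x in (0:ℝ)..(2 * π), |u x| ^ r :=
    mul_nonneg (by positivity)
      (intervalIntegral.integral_nonneg (by positivity) fun x _ => by positivity)
  rw [perNorm, ← Real.rpow_natCast, ← Real.rpow_mul hX]
  congr 1
  push_cast
  ring

lemma perNorm_two_sq (v : ℝ → ℝ) :
    perNorm 2 v ^ 2 = (1 / (2 * π)) * ∫ x in (0:ℝ)..(2 * π), v x ^ 2 := by
  rw [perNorm_sq]
  simp_rw [show (2:ℝ) = ((2:ℕ):ℝ) by norm_num, Real.rpow_natCast, sq_abs]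
  norm_num

lemma perNorm_const {r : ℝ} (hr : r ≠ 0) (a : ℝ) : perNorm r (fun _ => a) = |a| := by
  rw [perNorm, intervalIntegral.integral_const, smul_eq_mul, sub_zero, ← mul_assoc,
    one_div_mul_cancel (by positivity), one_mul, one_div, Real.rpow_rpow_inv (abs_nonneg a) hr]

lemma perNorm_const_mul {r : ℝ} (hr : 0 < r) (a : ℝ) (u : ℝ → ℝ) :
    perNorm r (fun x => a * u x) = |a| * perNorm r u := by
  have hI : 0 ≤ (1 / (2 * π)) * ∫ x in (0:ℝ)..(2 * π), |u x| ^ r :=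
    mul_nonneg (by positivity)
      (intervalIntegral.integral_nonneg (by positivity) fun x _ => by positivity)
  simp_rw [perNorm, abs_mul, Real.mul_rpow (abs_nonneg a) (abs_nonneg _),
    intervalIntegral.integral_const_mul, mul_left_comm (1 / (2 * π))]
  rw [Real.mul_rpow (by positivity) hI, ← Real.rpow_mul (abs_nonneg a), mul_one_div_cancel hr.ne',
    Real.rpow_one]

lemma self_mem_rayleighQuotients {p q : ℝ} (hp : p ≠ 0) (hq : q ≠ 0) (l : ℝ) :
    l ∈ rayleighQuotients p q l := by
  refine ⟨fun _ => 1, ⟨fun _ => rfl, contDiff_const⟩, one_ne_zero, ?_⟩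
  simp [perNorm_const hp, perNorm_const hq]

lemma rayleighQuotients_bddBelow (p q : ℝ) {l : ℝ} (hl : 0 ≤ l) :
    BddBelow (rayleighQuotients p q l) := by
  refine ⟨0, ?_⟩
  rintro _ ⟨u, -, -, rfl⟩
  positivity

lemma concaveOn_sInf_rayleighQuotients {p q : ℝ} (hp : p ≠ 0) (hq : q ≠ 0) :
    ConcaveOn ℝ (Ici 0) fun l => sInf (rayleighQuotients p q l) := by
  refine ⟨convex_Ici 0, fun x hx y hy a b ha hb hab => ?_⟩
  refine le_csInf ⟨_, self_mem_rayleighQuotients hp hq _⟩ ?_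
  rintro _ ⟨u, hu, hu0, rfl⟩
  set A := perNorm p (deriv u) ^ 2
  set B := perNorm p u ^ 2
  set C := perNorm q u ^ 2
  have hle : ∀ l ∈ Ici (0:ℝ), sInf (rayleighQuotients p q l) ≤ (A + l * B) / C :=
    fun l hl => csInf_le (rayleighQuotients_bddBelow p q hl) ⟨u, hu, hu0, rfl⟩
  calc a • sInf (rayleighQuotients p q x) + b • sInf (rayleighQuotients p q y)
      ≤ a * ((A + x * B) / C) + b * ((A + y * B) / C) := by
        simp only [smul_eq_mul]
        gcongr
        exacts [hle x hx, hle y hy]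
    _ = (A + (a • x + b • y) * B) / C := by
        simp only [smul_eq_mul]
        linear_combination (A / C) * hab

lemma integral_sq_pos_of_periodic {v : ℝ → ℝ} {T : ℝ} (hT : 0 < T) (hper : Function.Periodic v T)
    (hv : Continuous v) (hv0 : v ≠ 0) : 0 < ∫ x in (0:ℝ)..T, v x ^ 2 := by
  obtain ⟨x, hx⟩ := Function.ne_iff.mp hv0
  obtain ⟨y, hy, hxy⟩ := hper.exists_mem_Ico₀ hT x
  refine intervalIntegral.integral_pos hT (hv.pow 2).continuousOn (fun _ _ => sq_nonneg _)
    ⟨y, Ico_subset_Icc_self hy, ?_⟩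
  rw [← hxy]
  exact sq_pos_of_ne_zero hx

lemma lambdaOneStar_nonneg (p : ℝ) : 0 ≤ lambdaOneStar p := by
  refine Real.sInf_nonneg ?_
  rintro _ ⟨v, -, -, -, rfl⟩
  positivity

lemma exists_perNorm_deriv_sq_lt_of_lambdaOneStar_lt {p L : ℝ} (h : lambdaOneStar p < L) :
    ∃ v : ℝ → ℝ, PeriodicC1 v ∧ (∫ x in (0:ℝ)..(2 * π), v x) = 0 ∧
      perNorm p (deriv v) ^ 2 < L * perNorm 2 v ^ 2 := by
  have hsin : sin ≠ 0 := fun h => by simpa using congrFun h (π / 2)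
  obtain ⟨_, ⟨v, hv, hv0, hmean, rfl⟩, hlt⟩ := exists_lt_of_csInf_lt (by
    exact ⟨_, sin, ⟨sin_periodic, contDiff_sin⟩, hsin, by simp [integral_sin], rfl⟩) h
  have hv2 : 0 < perNorm 2 v ^ 2 := by
    rw [perNorm_two_sq]
    exact mul_pos (by positivity)
      (integral_sq_pos_of_periodic (by positivity) hv.1 hv.2.continuous hv0)
  exact ⟨v, hv, hmean, (div_lt_iff₀ hv2).mp hlt⟩

lemma exists_pos_lt_of_hasDerivAt_of_hasDerivAt_deriv_neg {f f' : ℝ → ℝ} {K : ℝ}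
    (hf : ∀ᶠ e in 𝓝 0, HasDerivAt f (f' e) e) (hf'0 : f' 0 = 0) (hf' : HasDerivAt f' K 0)
    (hK : K < 0) : ∃ e > 0, f e < f 0 := by
  have hf'_neg : ∀ᶠ e in 𝓝[>] 0, f' e < 0 := by
    have hslope := (hasDerivAt_iff_tendsto_slope.mp hf').mono_left
      (nhdsWithin_mono 0 fun e (he : 0 < e) => he.ne')
    filter_upwards [hslope.eventually_lt_const hK, self_mem_nhdsWithin] with e he (he0 : 0 < e)
    rwa [slope_def_field, hf'0, sub_zero, sub_zero, div_lt_iff₀ he0, zero_mul] at he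
  obtain ⟨δ, hδ, hsub⟩ := mem_nhdsGT_iff_exists_Ioo_subset.mp
    ((hf.filter_mono nhdsWithin_le_nhds).and hf'_neg)
  have hδ2 : δ / 2 ∈ Ioo 0 δ := ⟨half_pos hδ, half_lt_self hδ⟩
  have hcont : ContinuousOn f (Icc 0 (δ / 2)) := fun x hx => by
    rcases hx.1.eq_or_lt with rfl | hx0
    · exact hf.self_of_nhds.continuousAt.continuousWithinAt
    · exact (hsub ⟨hx0, hx.2.trans_lt hδ2.2⟩).1.continuousAt.continuousWithinAt
  obtain ⟨c, hc, hslope⟩ := exists_hasDerivAt_eq_slope f f' hδ2.1 hcont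
    fun x hx => (hsub ⟨hx.1, hx.2.trans hδ2.2⟩).1
  have hc_neg := (hsub ⟨hc.1, hc.2.trans hδ2.2⟩).2
  rw [hslope, sub_zero, div_lt_iff₀ hδ2.1, zero_mul] at hc_neg
  exact ⟨δ / 2, hδ2.1, sub_neg.mp hc_neg⟩

lemma rpow_le_two_rpow_abs {x s : ℝ} (h1 : 1 / 2 ≤ x) (h2 : x ≤ 2) : x ^ s ≤ 2 ^ |s| := by
  rcases le_or_gt 0 s with hs | hs
  · rw [abs_of_nonneg hs]
    exact Real.rpow_le_rpow (by linarith) h2 hs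
  · calc x ^ s ≤ (1 / 2 : ℝ) ^ s := Real.rpow_le_rpow_of_nonpos (by norm_num) h1 hs.le
      _ = 2 ^ |s| := by
        rw [abs_of_neg hs, one_div, Real.inv_rpow zero_le_two, Real.rpow_neg zero_le_two]

lemma eventually_one_add_mul_mem_Icc {v : ℝ → ℝ} {s : Set ℝ} {M : ℝ}
    (hM : ∀ x ∈ s, |v x| ≤ M) : ∀ᶠ e in 𝓝 (0:ℝ), ∀ x ∈ s, 1 + e * v x ∈ Icc (1 / 2 : ℝ) 2 := by
  have hsmall : ∀ᶠ e in 𝓝 (0:ℝ), |e| * M < 1 / 2 := by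
    have hlim : Tendsto (fun e : ℝ => |e| * M) (𝓝 0) (𝓝 0) := by
      simpa using (by fun_prop : Continuous fun e : ℝ => |e| * M).tendsto' 0 0
    exact hlim.eventually_lt_const (by norm_num)
  filter_upwards [hsmall] with e he x hx
  have hev : |e * v x| < 1 / 2 :=
    (abs_mul e (v x)).trans_lt ((mul_le_mul_of_nonneg_left (hM x hx) (abs_nonneg e)).trans_lt he)
  constructor <;> linarith [abs_lt.mp hev]

lemma eventually_hasDerivAt_integral_mul_one_add_mul_rpow {v w : ℝ → ℝ} {a b M : ℝ} (s : ℝ)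
    (hv : Continuous v) (hw : Continuous w) (hM : ∀ x ∈ uIcc a b, |v x| ≤ M) :
    ∀ᶠ e in 𝓝 0, HasDerivAt (fun e => ∫ x in a..b, w x * (1 + e * v x) ^ s)
      (s * ∫ x in a..b, w x * v x * (1 + e * v x) ^ (s - 1)) e := by
  filter_upwards [(eventually_one_add_mul_mem_Icc hM).eventually_nhds] with e₀ hU
  have hbase : ∀ x ∈ uIcc a b, 1 + e₀ * v x ≠ 0 := fun x hx => by
    linarith [(hU.self_of_nhds x hx).1]
  have hmeas : ∀ (e r : ℝ) (g : ℝ → ℝ), Measurable g →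
      Measurable fun x => g x * (1 + e * v x) ^ r := fun e r g hg =>
    hg.mul ((measurable_const.add (measurable_const.mul hv.measurable)).pow_const r)
  have key := intervalIntegral.hasDerivAt_integral_of_dominated_loc_of_deriv_le
    (μ := volume) (F := fun e x => w x * (1 + e * v x) ^ s)
    (F' := fun e x => s * (w x * v x * (1 + e * v x) ^ (s - 1)))
    (bound := fun x => |s| * (|w x| * M * 2 ^ |s - 1|)) hU
    (Eventually.of_forall fun e => (hmeas e s w hw.measurable).aestronglyMeasurable)
    ((hw.continuousOn.mul ((continuous_const.add (continuous_const.mul hv)).continuousOn.rpow_const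
      fun x hx => Or.inl (hbase x hx))).intervalIntegrable)
    ((hmeas e₀ (s - 1) _ (hw.measurable.mul hv.measurable)).const_mul s).aestronglyMeasurable
    (Eventually.of_forall fun x hx e he => ?_)
    ((by fun_prop : Continuous fun x => |s| * (|w x| * M * 2 ^ |s - 1|)).intervalIntegrable _ _)
    (Eventually.of_forall fun x hx e he => ?_)
  · simpa only [intervalIntegral.integral_const_mul] using key.2
  · have hx' := he x (uIoc_subset_uIcc hx)
    have hvM := hM x (uIoc_subset_uIcc hx)
    have hM0 : 0 ≤ M := (abs_nonneg _).trans hvM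
    have hpow0 : 0 ≤ (1 + e * v x) ^ (s - 1) := Real.rpow_nonneg (by linarith [hx'.1]) _
    have hpow := rpow_le_two_rpow_abs (s := s - 1) hx'.1 hx'.2
    rw [norm_mul, norm_mul, norm_mul, Real.norm_eq_abs, Real.norm_eq_abs, Real.norm_eq_abs,
      Real.norm_of_nonneg hpow0]
    gcongr
  · have hx' := he x (uIoc_subset_uIcc hx)
    have hlin : HasDerivAt (fun e => 1 + e * v x) (v x) e := by
      simpa using ((hasDerivAt_id e).mul_const (v x)).const_add 1
    exact ((hlin.rpow_const (p := s) (Or.inl (by linarith [hx'.1]))).const_mul (w x)).congr_deriv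
      (by ring)

lemma exists_hasDerivAt_perNorm_one_add_mul_sq {v : ℝ → ℝ} {r : ℝ} (hr : 0 < r)
    (hv : Continuous v) (hmean : ∫ x in (0:ℝ)..(2 * π), v x = 0) :
    ∃ b' : ℝ → ℝ, (∀ᶠ e in 𝓝 0,
        HasDerivAt (fun e => perNorm r (fun x => 1 + e * v x) ^ 2) (b' e) e) ∧
      b' 0 = 0 ∧ HasDerivAt b' (2 * (r - 1) * perNorm 2 v ^ 2) 0 := by
  obtain ⟨M, hM⟩ := (isCompact_uIcc (a := 0) (b := 2 * π)).exists_bound_of_continuousOn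
    hv.continuousOn
  simp only [Real.norm_eq_abs] at hM
  set c : ℝ := 1 / (2 * π)
  let G : ℝ → ℝ := fun e => ∫ x in (0:ℝ)..(2 * π), (1 + e * v x) ^ r
  let H : ℝ → ℝ := fun e => ∫ x in (0:ℝ)..(2 * π), v x * (1 + e * v x) ^ (r - 1)
  have hG : ∀ᶠ e in 𝓝 0, HasDerivAt G (r * H e) e := by
    simpa only [one_mul] using
      eventually_hasDerivAt_integral_mul_one_add_mul_rpow (w := fun _ => 1) r hv continuous_const hM
  have hH : HasDerivAt H ((r - 1) * ∫ x in (0:ℝ)..(2 * π), v x ^ 2) 0 := by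
    simpa [sq] using
      (eventually_hasDerivAt_integral_mul_one_add_mul_rpow (r - 1) hv hv hM).self_of_nhds
  have hH0 : H 0 = 0 := by simpa [H] using hmean
  have hcG0 : c * G 0 = 1 := by
    simp only [G, c, zero_mul, add_zero, Real.one_rpow, intervalIntegral.integral_const, sub_zero,
      smul_eq_mul, mul_one]
    field_simp
  have hGpos : ∀ᶠ e in 𝓝 0, 0 < c * G e := by
    have hlim := (hG.self_of_nhds.continuousAt.const_mul c).tendsto
    rw [hcG0] at hlim
    exact hlim.eventually_const_lt one_pos
  have heq : ∀ᶠ e in 𝓝 0, perNorm r (fun x => 1 + e * v x) ^ 2 = (c * G e) ^ (2 / r) := by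
    filter_upwards [eventually_one_add_mul_mem_Icc hM] with e he
    rw [perNorm_sq, intervalIntegral.integral_congr fun x hx => by
      rw [abs_of_pos (by linarith [(he x hx).1])]]
  refine ⟨fun e => c * (r * H e) * (2 / r) * (c * G e) ^ (2 / r - 1), ?_, by simp [hH0], ?_⟩
  · filter_upwards [hG, hGpos, heq.eventually_nhds] with e hGe hpos heqe
    exact ((hGe.const_mul c).rpow_const (Or.inl hpos.ne')).congr_of_eventuallyEq heqe
  · have hpow := (hG.self_of_nhds.const_mul c).rpow_const (p := 2 / r - 1)
      (Or.inl (by rw [hcG0]; exact one_ne_zero))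
    refine ((((hH.const_mul r).const_mul c).mul_const (2 / r)).mul hpow).congr_deriv ?_
    rw [hcG0, hH0, perNorm_two_sq, Real.one_rpow]
    simp only [c]
    field_simp
    ring

lemma exists_mem_rayleighQuotients_lt_of_perNorm_sq_lt {p q l : ℝ} (hq : q ≠ 0) (hl : 0 < l)
    {u : ℝ → ℝ} (hu : PeriodicC1 u)
    (h : perNorm p (deriv u) ^ 2 + l * perNorm p u ^ 2 < l * perNorm q u ^ 2) :
    ∃ m ∈ rayleighQuotients p q l, m < l := by
  have hnum : 0 ≤ perNorm p (deriv u) ^ 2 + l * perNorm p u ^ 2 := by positivity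
  have hQ : 0 < perNorm q u ^ 2 := pos_of_mul_pos_right (hnum.trans_lt h) hl.le
  have hu0 : u ≠ 0 := by
    rintro rfl
    have h0 : perNorm q 0 = 0 := (perNorm_const hq 0).trans abs_zero
    simp [h0] at hQ
  exact ⟨_, ⟨u, hu, hu0, rfl⟩, (div_lt_iff₀ hQ).mpr (by linarith)⟩

lemma exists_mem_rayleighQuotients_lt {p q l : ℝ} (hp : 0 < p) (hpq : p < q) (hl : 0 < l)
    {v : ℝ → ℝ} (hv : PeriodicC1 v) (hmean : ∫ x in (0:ℝ)..(2 * π), v x = 0)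
    (hlt : perNorm p (deriv v) ^ 2 < l * (q - p) * perNorm 2 v ^ 2) :
    ∃ m ∈ rayleighQuotients p q l, m < l := by
  obtain ⟨bp, hbp, hbp0, hbp'⟩ := exists_hasDerivAt_perNorm_one_add_mul_sq hp hv.2.continuous hmean
  obtain ⟨bq, hbq, hbq0, hbq'⟩ :=
    exists_hasDerivAt_perNorm_one_add_mul_sq (hp.trans hpq) hv.2.continuous hmean
  set D := perNorm p (deriv v) ^ 2
  set N := perNorm 2 v ^ 2
  have hd1 : ∀ᶠ e in 𝓝 0, HasDerivAt
      (fun e => e ^ 2 * D + l * perNorm p (fun x => 1 + e * v x) ^ 2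
        - l * perNorm q (fun x => 1 + e * v x) ^ 2)
      (2 * e * D + l * bp e - l * bq e) e := by
    filter_upwards [hbp, hbq] with e hpe hqe
    exact ((((hasDerivAt_pow 2 e).mul_const D).congr_deriv (by ring)).add
      (hpe.const_mul l)).sub (hqe.const_mul l)
  have hd2 : HasDerivAt (fun e => 2 * e * D + l * bp e - l * bq e)
      (2 * D + l * (2 * (p - 1) * N) - l * (2 * (q - 1) * N)) 0 :=
    (((((hasDerivAt_id 0).const_mul 2).mul_const D).congr_deriv (by ring)).add
      (hbp'.const_mul l)).sub (hbq'.const_mul l)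
  obtain ⟨e, -, he⟩ := exists_pos_lt_of_hasDerivAt_of_hasDerivAt_deriv_neg hd1
    (by simp [hbp0, hbq0]) hd2 (by linarith)
  have hderiv : deriv (fun x => 1 + e * v x) = fun x => e * deriv v x :=
    funext fun x => by simp [hv.2.differentiable one_ne_zero x]
  have hu : PeriodicC1 fun x => 1 + e * v x :=
    ⟨fun x => by simp [hv.1 x], contDiff_const.add (contDiff_const.mul hv.2)⟩
  refine exists_mem_rayleighQuotients_lt_of_perNorm_sq_lt (hp.trans hpq).ne' hl hu ?_
  rw [hderiv, perNorm_const_mul hp, mul_pow, sq_abs]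
  simp only [zero_mul, add_zero, perNorm_const hp.ne', perNorm_const (hp.trans hpq).ne'] at he
  linarith

/-- properties of λ ↦ μ(λ) (Proposition 2.1). -/
theorem mu_concave_increasing (p q : ℝ) (hp : 1 < p) (hq : p < q)
    (mu : ℝ → ℝ)
    (hmu : ∀ l : ℝ, mu l = sInf { m : ℝ | ∃ u : ℝ → ℝ, PeriodicC1 u ∧ u ≠ 0 ∧
      m = ((perNorm p (deriv u)) ^ 2 + l * (perNorm p u) ^ 2) / (perNorm q u) ^ 2 }) :
    ConcaveOn ℝ (Set.Ioi (0:ℝ)) mu ∧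
    (∀ l : ℝ, 0 < l → mu l ≤ l) ∧
    (∀ l : ℝ, lambdaOneStar p / (q - p) < l → mu l < l) := by
  obtain rfl : mu = fun l => sInf (rayleighQuotients p q l) := funext hmu
  have hp0 : 0 < p := zero_lt_one.trans hp
  have hq0 : 0 < q := hp0.trans hq
  refine ⟨(concaveOn_sInf_rayleighQuotients hp0.ne' hq0.ne').subset Ioi_subset_Ici_self
      (convex_Ioi 0),
    fun l hl => csInf_le (rayleighQuotients_bddBelow p q hl.le)
      (self_mem_rayleighQuotients hp0.ne' hq0.ne' l),
    fun l hl => ?_⟩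
  have hqp : 0 < q - p := sub_pos.mpr hq
  have hl0 : 0 < l := (div_nonneg (lambdaOneStar_nonneg p) hqp.le).trans_lt hl
  obtain ⟨v, hv, hmean, hlt⟩ :=
    exists_perNorm_deriv_sq_lt_of_lambdaOneStar_lt ((div_lt_iff₀ hqp).mp hl)
  obtain ⟨m, hm, hml⟩ := exists_mem_rayleighQuotients_lt hp0 hq hl0 hv hmean hlt
  exact (csInf_le (rayleighQuotients_bddBelow p q hl0.le) hm).trans_lt hml
end

section
/- Let p > 2 and let u : ℝ → ℝ be a 2π-periodic C¹ function which is not identically zero. Let ū_p := (∫₀^{2π}|u(x)|^{p−2}u(x) dx) / (∫₀^{2π}|u(x)|^{p−2} dx). Then ‖u'‖_p² · ‖u‖_p^{p−2} ≥ λ₁ · (1/(2π))∫₀^{2π} |u(x)|^{p−2} (u(x) − ū_p)² dx. -/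
/-
Let `c` be the plain mean of `u`. The weighted mean `ū_p` minimises `t ↦ ∫ |u|^{p-2} (u - t)²`,
so `ū_p` may be replaced by `c`. Hölder's inequality with exponents `p/(p-2)` and `p/2` bounds
`∫ |u|^{p-2} (u - c)² dσ` by `‖u‖_p^{p-2} ‖u - c‖_p²`, and since `u - c` has mean zero and the
same derivative as `u`, the definition of `λ₁` gives `λ₁ ‖u - c‖_p² ≤ ‖u'‖_p²`.
-/

open MeasureTheory Real

section WeightedMean

variable {α : Type*} [MeasurableSpace α] {μ : Measure α}

lemma integral_mul_sub_sq_eq {w u : α → ℝ} (hw : Integrable w μ)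
    (hwu : Integrable (fun x => w x * u x) μ) (hwu2 : Integrable (fun x => w x * u x ^ 2) μ)
    (t : ℝ) :
    ∫ x, w x * (u x - t) ^ 2 ∂μ =
      ∫ x, w x * u x ^ 2 ∂μ - 2 * t * ∫ x, w x * u x ∂μ + t ^ 2 * ∫ x, w x ∂μ := by
  have hexp : (fun x => w x * (u x - t) ^ 2) =
      fun x => w x * u x ^ 2 - 2 * t * (w x * u x) + t ^ 2 * w x := by
    funext x; ring
  rw [hexp, integral_add (f := fun x => w x * u x ^ 2 - 2 * t * (w x * u x))
    (hwu2.sub (hwu.const_mul _)) (hw.const_mul _),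
    integral_sub hwu2 (hwu.const_mul _), integral_const_mul, integral_const_mul]

lemma integral_mul_sub_weightedMean_sq_le {w u : α → ℝ} (hw0 : 0 ≤ w) (hw : Integrable w μ)
    (hwu : Integrable (fun x => w x * u x) μ) (hwu2 : Integrable (fun x => w x * u x ^ 2) μ)
    (t : ℝ) :
    ∫ x, w x * (u x - (∫ x, w x * u x ∂μ) / ∫ x, w x ∂μ) ^ 2 ∂μ ≤
      ∫ x, w x * (u x - t) ^ 2 ∂μ := by
  have hrhs : 0 ≤ ∫ x, w x * (u x - t) ^ 2 ∂μ :=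
    integral_nonneg fun x => mul_nonneg (hw0 x) (sq_nonneg _)
  rcases (integral_nonneg hw0).eq_or_lt with hW | hW
  · have hw_ae : w =ᵐ[μ] 0 := (integral_eq_zero_iff_of_nonneg hw0 hw).1 hW.symm
    rw [integral_eq_zero_of_ae (hw_ae.mono fun x hx => by simp [hx])]
    exact hrhs
  · rw [integral_mul_sub_sq_eq hw hwu hwu2, integral_mul_sub_sq_eq hw hwu hwu2]
    set m := (∫ x, w x * u x ∂μ) / ∫ x, w x ∂μ
    have hm : m * ∫ x, w x ∂μ = ∫ x, w x * u x ∂μ := div_mul_cancel₀ _ hW.ne'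
    rw [← hm]
    nlinarith [mul_nonneg (sq_nonneg (t - m)) hW.le]

end WeightedMean

lemma integral_abs_rpow_sub_two_mul_sq_le {α : Type*} [MeasurableSpace α] {μ : Measure α}
    {p : ℝ} (hp : 2 < p) {f g : α → ℝ} (hf : MemLp f (ENNReal.ofReal p) μ)
    (hg : MemLp g (ENNReal.ofReal p) μ) :
    ∫ x, |f x| ^ (p - 2) * g x ^ 2 ∂μ ≤
      (∫ x, |f x| ^ p ∂μ) ^ ((p - 2) / p) * (∫ x, |g x| ^ p ∂μ) ^ (2 / p) := by
  have hp2 : 0 < p - 2 := by linarith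
  have hconj : (p / (p - 2)).HolderConjugate (p / 2) := by
    rw [Real.holderConjugate_iff]
    refine ⟨by rw [lt_div_iff₀ hp2]; linarith, ?_⟩
    field_simp
    ring
  have hF : MemLp (fun x => |f x| ^ (p - 2)) (ENNReal.ofReal (p / (p - 2))) μ := by
    simpa [ENNReal.ofReal_div_of_pos hp2, hp2.le] using hf.norm_rpow_div (ENNReal.ofReal (p - 2))
  have hG : MemLp (fun x => |g x| ^ (2 : ℝ)) (ENNReal.ofReal (p / 2)) μ := by
    simpa [ENNReal.ofReal_div_of_pos two_pos] using hg.norm_rpow_div (ENNReal.ofReal 2)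
  have holder := integral_mul_le_Lp_mul_Lq_of_nonneg hconj
    (Filter.Eventually.of_forall fun x => rpow_nonneg (abs_nonneg _) _)
    (Filter.Eventually.of_forall fun x => rpow_nonneg (abs_nonneg _) _) hF hG
  have hpow (a q r : ℝ) (hq : q ≠ 0) (hqr : q * r = p) : (|a| ^ q) ^ r = |a| ^ p := by
    rw [← rpow_mul (abs_nonneg a), hqr]
  simp only [hpow _ _ _ hp2.ne' (mul_div_cancel₀ p hp2.ne'),
    hpow _ _ _ two_ne_zero (mul_div_cancel₀ p two_ne_zero), one_div_div] at holder
  simpa only [rpow_two, sq_abs] using holder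

/-- The paper's `dσ = dx / (2π)`, on the period `(0, 2π]`. -/
noncomputable def circleMeasure : Measure ℝ :=
  (2 * π).toNNReal⁻¹ • volume.restrict (Set.Ioc 0 (2 * π))

instance : IsFiniteMeasure circleMeasure := by
  unfold circleMeasure; infer_instance

lemma avg_eq_integral_circleMeasure (f : ℝ → ℝ) :
    (1 / (2 * π)) * ∫ x in (0:ℝ)..(2 * π), f x = ∫ x, f x ∂circleMeasure := by
  rw [circleMeasure, integral_smul_nnreal_measure, intervalIntegral.integral_of_le (by positivity),
    NNReal.smul_def, NNReal.coe_inv, Real.coe_toNNReal _ (by positivity), smul_eq_mul, one_div]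

lemma Continuous.memLp_circleMeasure {f : ℝ → ℝ} (hf : Continuous f) (q : ENNReal) :
    MemLp f q circleMeasure := by
  obtain ⟨C, hC⟩ := (isCompact_Icc (a := 0) (b := 2 * π)).exists_bound_of_continuousOn
    hf.continuousOn
  refine .of_bound hf.aestronglyMeasurable C (Measure.ae_smul_measure ?_ _)
  filter_upwards [ae_restrict_mem measurableSet_Ioc] with x hx
  exact hC x (Set.Ioc_subset_Icc_self hx)

lemma Continuous.integrable_circleMeasure {f : ℝ → ℝ} (hf : Continuous f) :
    Integrable f circleMeasure :=
  memLp_one_iff_integrable.1 (hf.memLp_circleMeasure 1)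

lemma perNorm_eq (r : ℝ) (u : ℝ → ℝ) :
    perNorm r u = (∫ x, |u x| ^ r ∂circleMeasure) ^ (1 / r) := by
  rw [perNorm, avg_eq_integral_circleMeasure]

lemma perNorm_nonneg (r : ℝ) (u : ℝ → ℝ) : 0 ≤ perNorm r u := by
  rw [perNorm_eq]
  exact rpow_nonneg (integral_nonneg fun _ => rpow_nonneg (abs_nonneg _) _) _

lemma integral_abs_rpow_sub_two_mul_sq_le_perNorm {p : ℝ} (hp : 2 < p) {f g : ℝ → ℝ}
    (hf : Continuous f) (hg : Continuous g) :
    ∫ x, |f x| ^ (p - 2) * g x ^ 2 ∂circleMeasure ≤ perNorm p f ^ (p - 2) * perNorm p g ^ 2 := by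
  have hnonneg (h : ℝ → ℝ) : 0 ≤ ∫ x, |h x| ^ p ∂circleMeasure :=
    integral_nonneg fun x => rpow_nonneg (abs_nonneg _) _
  rw [perNorm_eq, perNorm_eq, ← rpow_natCast, ← rpow_mul (hnonneg f), ← rpow_mul (hnonneg g)]
  convert integral_abs_rpow_sub_two_mul_sq_le hp (hf.memLp_circleMeasure _)
    (hg.memLp_circleMeasure _) using 3 <;> push_cast <;> ring

lemma perNorm_zero {r : ℝ} (hr : r ≠ 0) : perNorm r 0 = 0 := by
  simp [perNorm, zero_rpow hr, zero_rpow (inv_ne_zero hr)]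

lemma lambdaOne_nonneg (p : ℝ) : 0 ≤ lambdaOne p :=
  Real.sInf_nonneg fun _ ⟨_, _, _, _, hl⟩ => hl ▸ by positivity

lemma lambdaOne_mul_perNorm_sq_le {p : ℝ} (hp : p ≠ 0) {v : ℝ → ℝ} (hv : PeriodicC1 v)
    (hv0 : ∫ x in (0:ℝ)..(2 * π), v x = 0) :
    lambdaOne p * perNorm p v ^ 2 ≤ perNorm p (deriv v) ^ 2 := by
  rcases eq_or_ne (perNorm p v) 0 with hN | hN
  · rw [hN, zero_pow two_ne_zero, mul_zero]
    positivity
  have hv_ne : v ≠ 0 := by rintro rfl; exact hN (perNorm_zero hp)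
  have hle : lambdaOne p ≤ perNorm p (deriv v) ^ 2 / perNorm p v ^ 2 :=
    csInf_le ⟨0, fun _ ⟨_, _, _, _, hl⟩ => hl ▸ by positivity⟩ ⟨v, hv, hv_ne, hv0, rfl⟩
  rwa [le_div_iff₀ (by positivity)] at hle

lemma lambdaOne_mul_perNorm_sub_mean_sq_le {p : ℝ} (hp : p ≠ 0) {u : ℝ → ℝ} (hu : PeriodicC1 u) :
    lambdaOne p * perNorm p (fun x => u x - (∫ x in (0:ℝ)..(2 * π), u x) / (2 * π)) ^ 2 ≤
      perNorm p (deriv u) ^ 2 := by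
  set c := (∫ x in (0:ℝ)..(2 * π), u x) / (2 * π)
  have hv : PeriodicC1 fun x => u x - c :=
    ⟨fun x => by simp only [hu.1 x], hu.2.sub contDiff_const⟩
  have hv_mean : ∫ x in (0:ℝ)..(2 * π), (u x - c) = 0 := by
    rw [intervalIntegral.integral_sub (hu.2.continuous.intervalIntegrable _ _)
      intervalIntegrable_const, intervalIntegral.integral_const, smul_eq_mul, sub_zero,
      mul_div_cancel₀ _ (by positivity), sub_self]
  have hv_deriv : deriv (fun x => u x - c) = deriv u := funext fun _ => deriv_sub_const c
  simpa only [hv_deriv] using lambdaOne_mul_perNorm_sq_le hp hv hv_mean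

theorem weighted_poincare_general (p : ℝ) (hp : 2 < p)
    (u : ℝ → ℝ) (hu : PeriodicC1 u)
    (ubar : ℝ)
    (hubar : ubar = (∫ x in (0:ℝ)..(2 * π), |u x| ^ (p - 2) * u x) /
      (∫ x in (0:ℝ)..(2 * π), |u x| ^ (p - 2))) :
    (perNorm p (deriv u)) ^ 2 * (perNorm p u) ^ (p - 2) ≥
      lambdaOne p *
        ((1 / (2 * π)) * ∫ x in (0:ℝ)..(2 * π), |u x| ^ (p - 2) * (u x - ubar) ^ 2) := by
  have hu_cont : Continuous u := hu.2.continuous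
  have hw : Continuous fun x => |u x| ^ (p - 2) :=
    hu_cont.abs.rpow_const fun _ => Or.inr (by linarith)
  set c := (∫ x in (0:ℝ)..(2 * π), u x) / (2 * π)
  have hubar' : ubar = (∫ x, |u x| ^ (p - 2) * u x ∂circleMeasure) /
      ∫ x, |u x| ^ (p - 2) ∂circleMeasure := by
    rw [hubar, ← avg_eq_integral_circleMeasure, ← avg_eq_integral_circleMeasure,
      mul_div_mul_left _ _ (by positivity)]
  rw [avg_eq_integral_circleMeasure, hubar', ge_iff_le]
  calc _ ≤ lambdaOne p * ∫ x, |u x| ^ (p - 2) * (u x - c) ^ 2 ∂circleMeasure :=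
        mul_le_mul_of_nonneg_left (integral_mul_sub_weightedMean_sq_le
          (fun _ => rpow_nonneg (abs_nonneg _) _) hw.integrable_circleMeasure
          (hw.mul hu_cont).integrable_circleMeasure
          (hw.mul (hu_cont.pow 2)).integrable_circleMeasure c) (lambdaOne_nonneg p)
    _ ≤ lambdaOne p * (perNorm p u ^ (p - 2) * perNorm p (fun x => u x - c) ^ 2) :=
        mul_le_mul_of_nonneg_left (integral_abs_rpow_sub_two_mul_sq_le_perNorm hp hu_cont
          (hu_cont.sub continuous_const)) (lambdaOne_nonneg p)
    _ = perNorm p u ^ (p - 2) * (lambdaOne p * perNorm p (fun x => u x - c) ^ 2) := by ring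
    _ ≤ perNorm p u ^ (p - 2) * perNorm p (deriv u) ^ 2 :=
        mul_le_mul_of_nonneg_left (lambdaOne_mul_perNorm_sub_mean_sq_le (by linarith) hu)
          (rpow_nonneg (perNorm_nonneg p u) _)
    _ = perNorm p (deriv u) ^ 2 * perNorm p u ^ (p - 2) := mul_comm _ _

/-- the weighted Poincaré inequality (A.5) with the weighted average ū_p. -/
theorem weighted_poincare (p : ℝ) (hp : 2 < p)
    (u : ℝ → ℝ) (hu : PeriodicC1 u) (hu0 : u ≠ 0)
    (ubar : ℝ)
    (hubar : ubar = (∫ x in (0:ℝ)..(2 * π), |u x| ^ (p - 2) * u x) /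
      (∫ x in (0:ℝ)..(2 * π), |u x| ^ (p - 2))) :
    (perNorm p (deriv u)) ^ 2 * (perNorm p u) ^ (p - 2) ≥
      lambdaOne p *
        ((1 / (2 * π)) * ∫ x in (0:ℝ)..(2 * π), |u x| ^ (p - 2) * (u x - ubar) ^ 2) :=
  weighted_poincare_general p hp u hu ubar hubar
end

section
/- Let p > 2 and let u : ℝ → ℝ be a 2π-periodic, strictly positive, C² function. Then (1/(2π))∫₀^{2π} u(x)^{1−p} · (L_p u)(x) · |u'(x)|^p dx = ((p−1)²/(2p−1)) · (1/(2π))∫₀^{2π} u(x)^{−p} |u'(x)|^{2p} dx, where L_p u := (|u'|^{p−2}u')'. In particular this quantity is nonnegative. -/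
open MeasureTheory Real

/-! Writing `w = u'`, one has `L_p u = (p - 1) |w|^(p-2) w'`, so the left integrand is
`(p - 1) u^(1-p) |w|^(2p-2) w'`. The periodic function `u^(1-p) |w|^(2p-2) w` has derivative
`(1 - p) u^(-p) |w|^(2p) + (2p - 1) u^(1-p) |w|^(2p-2) w'`, whose integral over a period vanishes;
solving for the second integral gives the identity, whose right side is visibly nonnegative. -/

open Filter Topology

theorem hasDerivAt_abs_rpow_mul_self {q : ℝ} (hq : 0 < q) (t : ℝ) :
    HasDerivAt (fun s : ℝ => |s| ^ q * s) ((q + 1) * |t| ^ q) t := by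
  rcases eq_or_ne t 0 with rfl | ht
  · rw [hasDerivAt_iff_tendsto_slope_zero]
    have hcont : Tendsto (fun s : ℝ => |s| ^ q) (𝓝[≠] 0) (𝓝 ((q + 1) * |0| ^ q)) := by
      have := (continuous_abs.rpow_const fun _ => Or.inr hq.le).tendsto (0 : ℝ)
      simpa [zero_rpow hq.ne'] using this.mono_left nhdsWithin_le_nhds
    refine hcont.congr' ?_
    filter_upwards [self_mem_nhdsWithin] with s (hs : s ≠ 0)
    simp only [zero_add, abs_zero, zero_rpow hq.ne', mul_zero, sub_zero, smul_eq_mul]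
    field_simp
  · refine (((hasDerivAt_abs ht).rpow_const (p := q) (Or.inl (abs_ne_zero.2 ht))).mul
      (hasDerivAt_id' t)).congr_deriv ?_
    rw [rpow_sub_one (abs_ne_zero.2 ht)]
    field_simp
    rw [mul_right_comm, sign_mul_self]
    ring

theorem Function.Periodic.deriv {f : ℝ → ℝ} {c : ℝ} (hf : Function.Periodic f c) :
    Function.Periodic (deriv f) c := fun x => by
  rw [← deriv_comp_add_const, hf.funext]

theorem Function.Periodic.integral_eq_zero_of_hasDerivAt {F F' : ℝ → ℝ} {c : ℝ}
    (hF : Function.Periodic F c) (hderiv : ∀ x, HasDerivAt F (F' x) x)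
    (hint : IntervalIntegrable F' volume 0 c) : ∫ x in (0:ℝ)..c, F' x = 0 := by
  rw [intervalIntegral.integral_eq_sub_of_hasDerivAt (fun x _ => hderiv x) hint, hF.eq, sub_self]

theorem pLap_eq {p : ℝ} (hp : 2 < p) {u : ℝ → ℝ} {x : ℝ}
    (hu : DifferentiableAt ℝ (deriv u) x) :
    pLap p u x = (p - 1) * |deriv u x| ^ (p - 2) * deriv (deriv u) x :=
  ((hasDerivAt_abs_rpow_mul_self (by linarith) _).comp x hu.hasDerivAt).deriv.trans (by ring)

theorem HasDerivAt.rpow_mul_abs_rpow_mul {u w : ℝ → ℝ} {x w' a q : ℝ} (hq : 0 < q)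
    (hu : HasDerivAt u (w x) x) (hw : HasDerivAt w w' x) (hux : u x ≠ 0) :
    HasDerivAt (fun y => u y ^ a * (|w y| ^ q * w y))
      (a * (u x ^ (a - 1) * |w x| ^ (q + 2)) + (q + 1) * (u x ^ a * (|w x| ^ q * w'))) x := by
  refine ((hu.rpow_const (p := a) (Or.inl hux)).mul
    ((hasDerivAt_abs_rpow_mul_self hq _).comp x hw)).congr_deriv ?_
  rw [rpow_add' (abs_nonneg _) (by linarith), rpow_two, sq_abs, Function.comp_apply]
  ring

theorem integral_rpow_mul_abs_rpow_mul_deriv_deriv {p c : ℝ} (hp : 1 < p) {u : ℝ → ℝ}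
    (hper : Function.Periodic u c) (hu0 : ∀ x, u x ≠ 0) (hC2 : ContDiff ℝ 2 u) :
    (2 * p - 1) *
        ∫ x in (0:ℝ)..c, u x ^ (1 - p) * (|deriv u x| ^ (2 * p - 2) * deriv (deriv u) x) =
      (p - 1) * ∫ x in (0:ℝ)..c, u x ^ (-p) * |deriv u x| ^ (2 * p) := by
  have hu' : ContDiff ℝ 1 (deriv u) := hC2.deriv'
  have hpq : 0 < 2 * p - 2 := by linarith
  have hF (x : ℝ) : HasDerivAt (fun y => u y ^ (1 - p) * (|deriv u y| ^ (2 * p - 2) * deriv u y))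
      ((1 - p) * (u x ^ (-p) * |deriv u x| ^ (2 * p)) +
        (2 * p - 1) * (u x ^ (1 - p) * (|deriv u x| ^ (2 * p - 2) * deriv (deriv u) x))) x := by
    have := HasDerivAt.rpow_mul_abs_rpow_mul (a := 1 - p) hpq
      (hC2.differentiable two_ne_zero x).hasDerivAt (hu'.differentiable one_ne_zero x).hasDerivAt
      (hu0 x)
    rwa [show 1 - p - 1 = -p by ring, show 2 * p - 2 + 2 = 2 * p by ring,
      show 2 * p - 2 + 1 = 2 * p - 1 by ring] at this
  have hFper : Function.Periodic
      (fun y => u y ^ (1 - p) * (|deriv u y| ^ (2 * p - 2) * deriv u y)) c := fun x => by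
    simp only [hper x, hper.deriv x]
  have hu_rpow (r : ℝ) : Continuous fun x => u x ^ r :=
    hC2.continuous.rpow_const fun x => Or.inl (hu0 x)
  have hu'_rpow {r : ℝ} (hr : 0 ≤ r) : Continuous fun x => |deriv u x| ^ r :=
    hu'.continuous.abs.rpow_const fun _ => Or.inr hr
  have I₁ : IntervalIntegrable (fun x => u x ^ (-p) * |deriv u x| ^ (2 * p)) volume 0 c :=
    ((hu_rpow _).mul (hu'_rpow (by linarith))).intervalIntegrable 0 c
  have I₂ : IntervalIntegrable
      (fun x => u x ^ (1 - p) * (|deriv u x| ^ (2 * p - 2) * deriv (deriv u) x)) volume 0 c :=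
    ((hu_rpow _).mul ((hu'_rpow hpq.le).mul hu'.continuous_deriv_one)).intervalIntegrable 0 c
  have hzero := hFper.integral_eq_zero_of_hasDerivAt hF
    ((I₁.const_mul (1 - p)).add (I₂.const_mul (2 * p - 1)))
  rw [intervalIntegral.integral_add (I₁.const_mul _) (I₂.const_mul _),
    intervalIntegral.integral_const_mul, intervalIntegral.integral_const_mul] at hzero
  linarith

/-- the integration-by-parts identity for positive periodic functions,
and its nonnegativity. -/
theorem ibp_identity (p : ℝ) (hp : 2 < p) (u : ℝ → ℝ)
    (hper : Function.Periodic u (2 * π)) (hpos : ∀ x, 0 < u x)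
    (hC2 : ContDiff ℝ 2 u) :
    (1 / (2 * π)) * (∫ x in (0:ℝ)..(2 * π), (u x) ^ (1 - p) * pLap p u x * |deriv u x| ^ p)
      = ((p - 1) ^ 2 / (2 * p - 1)) *
        ((1 / (2 * π)) * ∫ x in (0:ℝ)..(2 * π), (u x) ^ (-p) * |deriv u x| ^ (2 * p)) ∧
    0 ≤ (1 / (2 * π)) *
      (∫ x in (0:ℝ)..(2 * π), (u x) ^ (1 - p) * pLap p u x * |deriv u x| ^ p) := by
  set I₁ := ∫ x in (0:ℝ)..(2 * π), u x ^ (-p) * |deriv u x| ^ (2 * p)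
  set I₂ := ∫ x in (0:ℝ)..(2 * π),
    u x ^ (1 - p) * (|deriv u x| ^ (2 * p - 2) * deriv (deriv u) x)
  have hLHS : ∫ x in (0:ℝ)..(2 * π), u x ^ (1 - p) * pLap p u x * |deriv u x| ^ p =
      (p - 1) * I₂ := by
    rw [← intervalIntegral.integral_const_mul]
    refine intervalIntegral.integral_congr fun x _ => ?_
    rw [pLap_eq hp ((hC2.deriv' (n := 1)).differentiable one_ne_zero x),
      show 2 * p - 2 = (p - 2) + p by ring, rpow_add' (abs_nonneg _) (by linarith)]
    ring
  have hI₂ : I₂ = (p - 1) / (2 * p - 1) * I₁ := by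
    rw [div_mul_eq_mul_div, eq_div_iff (by linarith), mul_comm,
      integral_rpow_mul_abs_rpow_mul_deriv_deriv (by linarith) hper (fun x => (hpos x).ne') hC2]
  have hI₁ : 0 ≤ I₁ :=
    intervalIntegral.integral_nonneg (by positivity) fun x _ => by have := hpos x; positivity
  have hid : (1 / (2 * π)) * ((p - 1) * I₂) =
      (p - 1) ^ 2 / (2 * p - 1) * ((1 / (2 * π)) * I₁) := by
    rw [hI₂]; ring
  rw [hLHS, hid]
  exact ⟨rfl,
    mul_nonneg (div_nonneg (sq_nonneg _) (by linarith)) (mul_nonneg (by positivity) hI₁)⟩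
end
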